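/- Let ℓ : [a,∞) → (0,∞) be positive, nondecreasing, differentiable, with ℓ'/ℓ nonincreasing. If q : [a,∞) → ℝ is boundedly decreasing (ν̄(q;λ) < ∞ for all λ > 1) and |q(x)| ≤ C·ℓ(x)²/(x·ℓ'(x)) for all x ≥ a, then q/ℓ is boundedly decreasing on [a,∞); in fact ν̄(q/ℓ; λ) ≤ ν̄(q;λ)/ℓ(a) + C(λ-1) for λ > 1. -/

import Mathlib

/-!
Split the increment of `q / ℓ` as
`q y / ℓ y - q x / ℓ x = (q y - q x) / ℓ y - q x * ((ℓ x)⁻¹ - (ℓ y)⁻¹)`.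
The first term is at least `-ν̄(q;λ) / ℓ a` because `ℓ` is increasing. For the second, `ℓ'/ℓ`
nonincreasing makes `log ∘ ℓ` concave, so `(ℓ x)⁻¹ - (ℓ y)⁻¹ ≤ ℓ' x (y - x) / ℓ x ^ 2`; the growth
bound on `q` turns this into `C (y - x) / x ≤ C (λ - 1)`.
-/

open Set

/-- The extended-real quantity ν̄(f;λ) = -inf{f(y)-f(x) : a ≤ x ≤ y ≤ λx}. -/
noncomputable def nubar (a : ℝ) (f : ℝ → ℝ) (lam : ℝ) : EReal :=
  - sInf ((fun p : ℝ × ℝ => ((f p.2 - f p.1 : ℝ) : EReal)) ''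
      {p : ℝ × ℝ | a ≤ p.1 ∧ p.1 ≤ p.2 ∧ p.2 ≤ lam * p.1})

lemma HasDerivAt.nonneg_of_monotoneOn_Ici {g : ℝ → ℝ} {g' a x : ℝ} (hd : HasDerivAt g g' x)
    (hg : MonotoneOn g (Ici a)) (hx : a ≤ x) : 0 ≤ g' := by
  have hacc : AccPt x (Filter.principal (Ici x)) := by
    rw [accPt_principal_iff_nhdsWithin, Ici_sdiff_left]
    infer_instance
  exact hd.hasDerivWithinAt.nonneg_of_monotoneOn hacc (hg.mono (Ici_subset_Ici.2 hx))

lemma sub_le_mul_sub_of_antitoneOn_deriv {f f' : ℝ → ℝ} {a x y : ℝ}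
    (hf : ∀ t, a ≤ t → HasDerivAt f (f' t) t) (hf' : AntitoneOn f' (Ici a))
    (hax : a ≤ x) (hxy : x ≤ y) : f y - f x ≤ f' x * (y - x) := by
  refine (convex_Ici x).image_sub_le_mul_sub_of_deriv_le
    (fun t ht => (hf t (hax.trans ht)).continuousAt.continuousWithinAt)
    (fun t ht => ?_) (fun t ht => ?_) x self_mem_Ici y hxy hxy
  · rw [interior_Ici] at ht
    exact (hf t (hax.trans ht.le)).differentiableAt.differentiableWithinAt
  · rw [interior_Ici] at ht
    rw [(hf t (hax.trans ht.le)).deriv]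
    exact hf' (mem_Ici.2 hax) (mem_Ici.2 (hax.trans ht.le)) ht.le

section LogConcave

variable {a : ℝ} {ℓ ℓ' : ℝ → ℝ}

lemma inv_sub_inv_le_of_antitoneOn_logDeriv (hpos : ∀ x, a ≤ x → 0 < ℓ x)
    (hderiv : ∀ x, a ≤ x → HasDerivAt ℓ (ℓ' x) x)
    (hanti : AntitoneOn (fun x => ℓ' x / ℓ x) (Ici a)) {x y : ℝ} (hax : a ≤ x) (hxy : x ≤ y) :
    (ℓ x)⁻¹ - (ℓ y)⁻¹ ≤ ℓ' x / ℓ x ^ 2 * (y - x) := by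
  have hx := hpos x hax
  have hy := hpos y (hax.trans hxy)
  have hlog : Real.log (ℓ y) - Real.log (ℓ x) ≤ ℓ' x / ℓ x * (y - x) :=
    sub_le_mul_sub_of_antitoneOn_deriv (fun t ht => (hderiv t ht).log (hpos t ht).ne') hanti
      hax hxy
  calc (ℓ x)⁻¹ - (ℓ y)⁻¹ = (1 - (ℓ y / ℓ x)⁻¹) / ℓ x := by field_simp
    _ ≤ Real.log (ℓ y / ℓ x) / ℓ x := by
      gcongr
      exact Real.one_sub_inv_le_log_of_pos (div_pos hy hx)
    _ ≤ ℓ' x / ℓ x * (y - x) / ℓ x := by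
      rw [Real.log_div hy.ne' hx.ne']
      gcongr
    _ = ℓ' x / ℓ x ^ 2 * (y - x) := by field_simp

variable {C lam : ℝ} {q : ℝ → ℝ}

lemma abs_mul_inv_sub_inv_le (ha : 0 < a) (hC : 0 ≤ C) (hpos : ∀ x, a ≤ x → 0 < ℓ x)
    (hmono : MonotoneOn ℓ (Ici a)) (hderiv : ∀ x, a ≤ x → HasDerivAt ℓ (ℓ' x) x)
    (hanti : AntitoneOn (fun x => ℓ' x / ℓ x) (Ici a))
    (hq : ∀ x, a ≤ x → |q x| ≤ C * (ℓ x) ^ 2 / (x * ℓ' x))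
    {x y : ℝ} (hax : a ≤ x) (hxy : x ≤ y) (hyx : y ≤ lam * x) :
    |q x| * ((ℓ x)⁻¹ - (ℓ y)⁻¹) ≤ C * (lam - 1) := by
  have hx : 0 < x := ha.trans_le hax
  have hℓx := hpos x hax
  have hℓ'x : 0 ≤ ℓ' x := (hderiv x hax).nonneg_of_monotoneOn_Ici hmono hax
  -- also when `ℓ' x = 0`: then `hq` reads `|q x| ≤ 0`, since division by zero gives `0`
  have hqℓ' : |q x| * (x * ℓ' x) ≤ C * ℓ x ^ 2 :=
    mul_le_of_le_div₀ (by positivity) (by positivity) (hq x hax)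
  have hgap : 0 ≤ (y - x) / x := div_nonneg (sub_nonneg.2 hxy) hx.le
  calc |q x| * ((ℓ x)⁻¹ - (ℓ y)⁻¹) ≤ |q x| * (ℓ' x / ℓ x ^ 2 * (y - x)) :=
        mul_le_mul_of_nonneg_left
          (inv_sub_inv_le_of_antitoneOn_logDeriv hpos hderiv hanti hax hxy) (abs_nonneg _)
    _ = |q x| * (x * ℓ' x) / ℓ x ^ 2 * ((y - x) / x) := by field_simp
    _ ≤ C * ℓ x ^ 2 / ℓ x ^ 2 * ((y - x) / x) := by gcongr
    _ = C * ((y - x) / x) := by field_simp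
    _ ≤ C * (lam - 1) := by
      gcongr
      rw [div_le_iff₀ hx]
      linarith

lemma neg_le_div_sub_div (ha : 0 < a) (hC : 0 ≤ C) (hpos : ∀ x, a ≤ x → 0 < ℓ x)
    (hmono : MonotoneOn ℓ (Ici a)) (hderiv : ∀ x, a ≤ x → HasDerivAt ℓ (ℓ' x) x)
    (hanti : AntitoneOn (fun x => ℓ' x / ℓ x) (Ici a))
    (hq : ∀ x, a ≤ x → |q x| ≤ C * (ℓ x) ^ 2 / (x * ℓ' x)) {ν : ℝ} (hν : 0 ≤ ν)
    {x y : ℝ} (hax : a ≤ x) (hxy : x ≤ y) (hyx : y ≤ lam * x) (hinc : -ν ≤ q y - q x) :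
    -(ν * (ℓ a)⁻¹ + C * (lam - 1)) ≤ q y / ℓ y - q x / ℓ x := by
  have hay : a ≤ y := hax.trans hxy
  have hℓa := hpos a le_rfl
  have hℓx := hpos x hax
  have hℓy := hpos y hay
  have hincrement : -(ν * (ℓ a)⁻¹) ≤ (q y - q x) / ℓ y :=
    calc -(ν * (ℓ a)⁻¹) ≤ -ν / ℓ y := by
          rw [neg_div, neg_le_neg_iff, ← div_eq_mul_inv]
          exact div_le_div_of_nonneg_left hν hℓa (hmono self_mem_Ici hay hay)
      _ ≤ (q y - q x) / ℓ y := by gcongr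
  have hweight : q x * ((ℓ x)⁻¹ - (ℓ y)⁻¹) ≤ C * (lam - 1) := by
    refine le_trans ?_ (abs_mul_inv_sub_inv_le ha hC hpos hmono hderiv hanti hq hax hxy hyx)
    gcongr
    · exact sub_nonneg.2 (inv_anti₀ hℓx (hmono (mem_Ici.2 hax) hay hxy))
    · exact le_abs_self _
  have hsplit : q y / ℓ y - q x / ℓ x = (q y - q x) / ℓ y - q x * ((ℓ x)⁻¹ - (ℓ y)⁻¹) := by
    field_simp
    ring
  linarith

end LogConcave

section Nubar

variable {a lam : ℝ} {f : ℝ → ℝ}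

lemma nubar_le_coe_iff {c : ℝ} :
    nubar a f lam ≤ c ↔ ∀ x y, a ≤ x → x ≤ y → y ≤ lam * x → -c ≤ f y - f x := by
  rw [nubar, EReal.neg_le, le_sInf_iff, forall_mem_image]
  constructor
  · intro h x y h1 h2 h3
    exact_mod_cast @h (x, y) ⟨h1, h2, h3⟩
  · rintro h ⟨x, y⟩ ⟨h1, h2, h3⟩
    exact_mod_cast h x y h1 h2 h3

lemma coe_sub_le_nubar {x y : ℝ} (hax : a ≤ x) (hxy : x ≤ y) (hyx : y ≤ lam * x) :
    ((f x - f y : ℝ) : EReal) ≤ nubar a f lam := by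
  rw [nubar, EReal.le_neg, ← EReal.coe_neg, neg_sub]
  exact sInf_le ⟨(x, y), ⟨hax, hxy, hyx⟩, rfl⟩

lemma nubar_nonneg (ha : 0 ≤ a) (hlam : 1 ≤ lam) : 0 ≤ nubar a f lam := by
  simpa using coe_sub_le_nubar (f := f) le_rfl le_rfl (le_mul_of_one_le_left ha hlam)

end Nubar

theorem boundedlyDecreasing_div_ell (a C : ℝ) (ha : 0 < a) (hC : 0 < C)
    (ℓ ℓ' q : ℝ → ℝ)
    (hpos : ∀ x, a ≤ x → 0 < ℓ x)
    (hmono : MonotoneOn ℓ (Ici a))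
    (hderiv : ∀ x, a ≤ x → HasDerivAt ℓ (ℓ' x) x)
    (hanti : AntitoneOn (fun x => ℓ' x / ℓ x) (Ici a))
    (hq : ∀ x, a ≤ x → |q x| ≤ C * (ℓ x) ^ 2 / (x * ℓ' x))
    (hbdd : ∀ lam : ℝ, 1 < lam → nubar a q lam < ⊤) :
    (∀ lam : ℝ, 1 < lam → nubar a (fun x => q x / ℓ x) lam < ⊤) ∧
    (∀ lam : ℝ, 1 < lam →
      nubar a (fun x => q x / ℓ x) lam ≤
        nubar a q lam * (((ℓ a)⁻¹ : ℝ) : EReal) + ((C * (lam - 1) : ℝ) : EReal)) := by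
  have hnonneg (lam : ℝ) (hlam : 1 < lam) : 0 ≤ nubar a q lam := nubar_nonneg ha.le hlam.le
  have hfinite (lam : ℝ) (hlam : 1 < lam) : ((nubar a q lam).toReal : EReal) = nubar a q lam :=
    EReal.coe_toReal (hbdd lam hlam).ne (EReal.bot_lt_zero.trans_le (hnonneg lam hlam)).ne'
  have hbound (lam : ℝ) (hlam : 1 < lam) : nubar a (fun x => q x / ℓ x) lam ≤
      (((nubar a q lam).toReal * (ℓ a)⁻¹ + C * (lam - 1) : ℝ) : EReal) := by
    rw [nubar_le_coe_iff]
    intro x y hax hxy hyx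
    have hinc := nubar_le_coe_iff.1 (hfinite lam hlam).ge x y hax hxy hyx
    exact neg_le_div_sub_div ha hC.le hpos hmono hderiv hanti hq
      (EReal.toReal_nonneg (hnonneg lam hlam)) hax hxy hyx hinc
  refine ⟨fun lam hlam => (hbound lam hlam).trans_lt (EReal.coe_lt_top _), fun lam hlam => ?_⟩
  rw [← hfinite lam hlam]
  exact_mod_cast hbound lam hlam
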